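/- For the ideal low-pass filter with cutoff frequency f_c, the dual problem sup{ ⟨y,p⟩ : ‖Φ*p‖_∞ ≤ 1 } always admits a solution; hence the minimal-norm certificate p₀ is well defined for any input measure m₀. -/

import Mathlib

open MeasureTheory

theorem Real.fact_zero_lt_one : Fact ((0 : ℝ) < 1) :=
  ⟨zero_lt_one⟩

attribute [local instance] Real.fact_zero_lt_one

noncomputable section

/-- The torus `T = ℝ/ℤ`. -/
abbrev 𝕋 := AddCircle (1 : ℝ)

/-- Integral `∫ f dm` of a function against a (finite) signed Radon measure on the torus. -/
def sInt (m : SignedMeasure 𝕋) (f : 𝕋 → ℝ) : ℝ :=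
  ∫ x, f x ∂m.toJordanDecomposition.posPart - ∫ x, f x ∂m.toJordanDecomposition.negPart

/-- The total variation norm `‖m‖_TV = sup { ∫ ψ dm : ψ ∈ C(𝕋), ‖ψ‖_∞ ≤ 1 }`. -/
def tv (m : SignedMeasure 𝕋) : ℝ :=
  sSup { r | ∃ ψ : C(𝕋, ℝ), ‖ψ‖ ≤ 1 ∧ r = sInt m ψ }

/-- The lift of a function on the torus to a `1`-periodic function on `ℝ`. -/
def lift (f : 𝕋 → ℝ) : ℝ → ℝ := fun s => f (s : 𝕋)

/-- The convolution operator `Φ : M(𝕋) → L²(𝕋)`, `(Φm)(t) = ∫ φ(x − t) dm(x)`. -/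
def Phi (φ : 𝕋 → ℝ) (m : SignedMeasure 𝕋) : 𝕋 → ℝ := fun t => sInt m (fun x => φ (x - t))

/-- The adjoint operator `Φ* : L²(𝕋) → C(𝕋)`, `(Φ*p)(t) = ∫ φ(t − x) p(x) dx`. -/
def PhiStar (φ : 𝕋 → ℝ) (p : 𝕋 → ℝ) : 𝕋 → ℝ := fun t => ∫ x, φ (t - x) * p x

/-- The `L²(𝕋)` norm of a function. -/
def L2norm (p : 𝕋 → ℝ) : ℝ := Real.sqrt (∫ t, (p t) ^ 2)

/-- The `L²(𝕋)` inner product. -/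
def dotL2 (y p : 𝕋 → ℝ) : ℝ := ∫ t, y t * p t

/-- `p` is admissible for the dual problems: `p ∈ L²` and `‖Φ*p‖_∞ ≤ 1`. -/
def DualAdm (φ : 𝕋 → ℝ) (p : 𝕋 → ℝ) : Prop :=
  MemLp p 2 volume ∧ ∀ t : 𝕋, |PhiStar φ p t| ≤ 1


/-- `φ` is the Dirichlet kernel with cutoff frequency `f_c`:
`φ(t) = ∑_{k=−f_c}^{f_c} e^{2iπkt} = 1 + 2 ∑_{k=1}^{f_c} cos(2πkt)`. -/
def IsDirichlet (fc : ℕ) (φ : 𝕋 → ℝ) : Prop :=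
  ∀ s : ℝ, lift φ s = 1 + 2 * ∑ k ∈ Finset.Icc 1 fc, Real.cos (2 * Real.pi * k * s)

/-! For the Dirichlet kernel, `Φ*` multiplies the Fourier coefficients by the indicator of
`[-f_c, f_c]`: it is the orthogonal projection of `L²(𝕋)` onto the finite-dimensional space `W`
of real trigonometric polynomials of degree `≤ f_c`, so `‖Φ*q‖₂ ≤ ‖q‖₂` by Parseval. By Fubini,
`⟨Φm₀, q⟩ = ∫ Φ*q dm₀`, so the dual problem is the maximisation of the continuous function
`η ↦ ∫ η dm₀` over the sup-norm unit ball of `W`, which is compact. A maximiser of least `L²`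
norm exists by compactness again, and it beats every admissible `q` since `Φ*q` lies in the
ball, has the same value as `q` and a smaller norm. -/

open Complex

theorem continuous_integral_continuousMap {X : Type*} [TopologicalSpace X] [CompactSpace X]
    [MeasurableSpace X] [BorelSpace X] (μ : Measure X) [IsFiniteMeasure μ] :
    Continuous fun f : C(X, ℝ) => ∫ x, f x ∂μ :=
  (continuous_integral.comp (ContinuousMap.toLp 1 μ ℝ).continuous).congr fun f =>
    integral_congr_ae (ContinuousMap.coeFn_toLp μ f)

theorem continuous_sInt (m : SignedMeasure 𝕋) : Continuous fun f : C(𝕋, ℝ) => sInt m f :=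
  (continuous_integral_continuousMap _).sub (continuous_integral_continuousMap _)

theorem IsCompact.exists_isMaxOn_isMinOn_argmax {α : Type*} [TopologicalSpace α] {K : Set α}
    (hK : IsCompact K) (hne : K.Nonempty) {f g : α → ℝ} (hf : Continuous f)
    (hg : Continuous g) :
    ∃ x₀ ∈ K, IsMaxOn f K x₀ ∧ IsMinOn g {x ∈ K | f x = f x₀} x₀ := by
  obtain ⟨x₁, hx₁, hmax⟩ := hK.exists_isMaxOn hne hf.continuousOn
  have hargmax : IsCompact {x ∈ K | f x = f x₁} :=
    hK.inter_right (isClosed_eq hf continuous_const)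
  obtain ⟨x₀, ⟨hx₀, hfx₀⟩, hmin⟩ := hargmax.exists_isMinOn ⟨x₁, hx₁, rfl⟩ hg.continuousOn
  exact ⟨x₀, hx₀, fun x hx => hfx₀ ▸ hmax hx, by rwa [hfx₀]⟩

section Fubini

variable {φ : 𝕋 → ℝ}

theorem integrable_prod_sub_mul (hφ : Continuous φ) (μ : Measure 𝕋) [IsFiniteMeasure μ]
    {q : 𝕋 → ℝ} (hq : Integrable q) :
    Integrable (fun z : 𝕋 × 𝕋 => φ (z.1 - z.2) * q z.2) (μ.prod volume) := by
  have hq' : Integrable (fun z : 𝕋 × 𝕋 => 1 * q z.2) (μ.prod volume) :=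
    (integrable_const 1).mul_prod hq
  simp only [one_mul] at hq'
  exact hq'.bdd_mul (hφ.comp (continuous_fst.sub continuous_snd)).aestronglyMeasurable
    (.of_forall fun z => (⟨φ, hφ⟩ : C(𝕋, ℝ)).norm_coe_le_norm _)

theorem integrable_integral_sub_mul (hφ : Continuous φ) (μ : Measure 𝕋) [IsFiniteMeasure μ]
    {q : 𝕋 → ℝ} (hq : Integrable q) :
    Integrable fun t => (∫ x, φ (x - t) ∂μ) * q t := by
  simpa only [integral_mul_const] using (integrable_prod_sub_mul hφ μ hq).integral_prod_right

theorem integral_integral_sub_mul_swap (hφ : Continuous φ) (μ : Measure 𝕋) [IsFiniteMeasure μ]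
    {q : 𝕋 → ℝ} (hq : Integrable q) :
    ∫ t, (∫ x, φ (x - t) ∂μ) * q t = ∫ x, PhiStar φ q x ∂μ := by
  simp only [← integral_mul_const]
  exact (integral_integral_swap (integrable_prod_sub_mul hφ μ hq)).symm

theorem dotL2_Phi_eq_sInt_phiStar (hφ : Continuous φ) (m : SignedMeasure 𝕋) {q : 𝕋 → ℝ}
    (hq : Integrable q) :
    dotL2 (Phi φ m) q = sInt m (PhiStar φ q) := by
  simp only [dotL2, Phi, sInt, sub_mul]
  rw [integral_sub (integrable_integral_sub_mul hφ _ hq) (integrable_integral_sub_mul hφ _ hq),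
    integral_integral_sub_mul_swap hφ _ hq, integral_integral_sub_mul_swap hφ _ hq]

end Fubini

theorem volume_eq_haarAddCircle : (volume : Measure 𝕋) = AddCircle.haarAddCircle := by
  rw [AddCircle.volume_eq_smul_haarAddCircle, ENNReal.ofReal_one, one_smul]

theorem hasSum_sq_fourierCoeff_ofReal {q : 𝕋 → ℝ} (hq : MemLp q 2) :
    HasSum (fun n => ‖fourierCoeff (fun x => (q x : ℂ)) n‖ ^ 2) (∫ x, q x ^ 2) := by
  rw [volume_eq_haarAddCircle] at hq ⊢
  have hqC := hq.ofReal (K := ℂ)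
  have h := hasSum_sq_fourierCoeff hqC.toLp
  rw [fourierCoeff_congr_ae hqC.coeFn_toLp] at h
  convert h using 1
  · rfl
  refine integral_congr_ae (hqC.coeFn_toLp.mono fun x hx => ?_)
  beta_reduce
  rw [hx, RCLike.norm_ofReal, sq_abs]

theorem fourier_sub_apply (n : ℤ) (t x : 𝕋) :
    fourier n (t - x) = fourier n t * fourier (-n) x := by
  rw [fourier_apply, fourier_apply, fourier_apply, smul_sub, neg_smul, sub_eq_add_neg,
    AddCircle.toCircle_add, Circle.coe_mul]

theorem fourier_add_fourier_neg (k : ℤ) (s : ℝ) :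
    fourier k (s : 𝕋) + fourier (-k) (s : 𝕋) = 2 * Real.cos (2 * Real.pi * k * s) := by
  rw [fourier_coe_apply, fourier_coe_apply, ofReal_cos, two_cos]
  congr 2 <;> push_cast <;> ring

theorem sum_fourier_Icc_neg (N : ℕ) (s : ℝ) :
    ∑ n ∈ Finset.Icc (-(N : ℤ)) N, fourier n (s : 𝕋) =
      ((1 + 2 * ∑ k ∈ Finset.Icc 1 N, Real.cos (2 * Real.pi * k * s) : ℝ) : ℂ) := by
  induction N with
  | zero => simp
  | succ N ih =>
    have hIcc : Finset.Icc (-((N + 1 : ℕ) : ℤ)) (N + 1 : ℕ) =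
        insert (-(N + 1 : ℤ)) (insert (N + 1 : ℤ) (Finset.Icc (-(N : ℤ)) N)) := by
      ext n; simp; omega
    rw [hIcc, Finset.sum_insert (by simp; omega), Finset.sum_insert (by simp), ih,
      Finset.sum_Icc_succ_top (by omega)]
    have hpair := fourier_add_fourier_neg (N + 1) s
    push_cast at hpair ⊢
    linear_combination hpair

namespace IsDirichlet

variable {fc : ℕ} {φ : 𝕋 → ℝ}

theorem ofReal_eq_sum_fourier (hφ : IsDirichlet fc φ) (u : 𝕋) :
    (φ u : ℂ) = ∑ n ∈ Finset.Icc (-(fc : ℤ)) fc, fourier n u := by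
  induction u using QuotientAddGroup.induction_on with
  | H s => rw [sum_fourier_Icc_neg, ← hφ s]; rfl

theorem continuous (hφ : IsDirichlet fc φ) : Continuous φ := by
  have hφ_re : φ = fun u => (∑ n ∈ Finset.Icc (-(fc : ℤ)) fc, fourier n u).re := by
    ext u; rw [← hφ.ofReal_eq_sum_fourier, ofReal_re]
  rw [hφ_re]
  fun_prop

theorem ofReal_phiStar (hφ : IsDirichlet fc φ) {q : 𝕋 → ℝ} (hq : Integrable q) (t : 𝕋) :
    (PhiStar φ q t : ℂ) = ∑ n ∈ Finset.Icc (-(fc : ℤ)) fc,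
      fourierCoeff (fun x => (q x : ℂ)) n * fourier n t := by
  rw [volume_eq_haarAddCircle] at hq
  have hexpand : ∀ x, ((φ (t - x) * q x : ℝ) : ℂ) = ∑ n ∈ Finset.Icc (-(fc : ℤ)) fc,
      fourier n t * (fourier (-n) x • (q x : ℂ)) := by
    intro x
    simp only [ofReal_mul, hφ.ofReal_eq_sum_fourier, fourier_sub_apply, Finset.sum_mul,
      smul_eq_mul, mul_assoc]
  rw [PhiStar, ← integral_complex_ofReal, volume_eq_haarAddCircle,
    integral_congr_ae (.of_forall hexpand),
    integral_finsetSum _ fun n _ => (hq.ofReal.fourier_smul (-n)).const_mul _]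
  simp only [integral_const_mul, fourierCoeff, mul_comm]

theorem continuous_phiStar (hφ : IsDirichlet fc φ) {q : 𝕋 → ℝ} (hq : Integrable q) :
    Continuous (PhiStar φ q) := by
  have hre : PhiStar φ q = fun t => (∑ n ∈ Finset.Icc (-(fc : ℤ)) fc,
      fourierCoeff (fun x => (q x : ℂ)) n * fourier n t).re := by
    ext t; rw [← hφ.ofReal_phiStar hq, ofReal_re]
  rw [hre]
  fun_prop

theorem fourierCoeff_phiStar (hφ : IsDirichlet fc φ) {q : 𝕋 → ℝ} (hq : Integrable q)
    (n : ℤ) :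
    fourierCoeff (fun x => (PhiStar φ q x : ℂ)) n =
      if n ∈ Finset.Icc (-(fc : ℤ)) fc then fourierCoeff (fun x => (q x : ℂ)) n else 0 := by
  have hsum : (fun x => (PhiStar φ q x : ℂ)) = ∑ m ∈ Finset.Icc (-(fc : ℤ)) fc,
      fun x => fourierCoeff (fun x => (q x : ℂ)) m * fourier m x := by
    ext x; rw [hφ.ofReal_phiStar hq, Finset.sum_apply]
  rw [hsum, fourierCoeff.sum _ _ fun m _ => ((fourier m).continuous.integrable_of_hasCompactSupport
    (.of_compactSpace _)).const_mul _]
  simp only [Finset.sum_apply, fourierCoeff.const_mul, fourierCoeff_fourier, Pi.single_apply,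
    mul_ite, mul_one, mul_zero, Finset.sum_ite_eq]

theorem phiStar_phiStar (hφ : IsDirichlet fc φ) {q : 𝕋 → ℝ} (hq : Integrable q) :
    PhiStar φ (PhiStar φ q) = PhiStar φ q := by
  have hint : Integrable (PhiStar φ q) :=
    (hφ.continuous_phiStar hq).integrable_of_hasCompactSupport (.of_compactSpace _)
  ext t
  apply ofReal_injective
  rw [hφ.ofReal_phiStar hint, hφ.ofReal_phiStar hq]
  refine Finset.sum_congr rfl fun n hn => ?_
  rw [hφ.fourierCoeff_phiStar hq, if_pos hn]

theorem integral_phiStar_sq_le (hφ : IsDirichlet fc φ) {q : 𝕋 → ℝ} (hq : MemLp q 2) :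
    ∫ x, PhiStar φ q x ^ 2 ≤ ∫ x, q x ^ 2 := by
  have hint := hq.integrable one_le_two
  have hmem : MemLp (PhiStar φ q) 2 :=
    ContinuousMap.memLp _ ℝ ⟨PhiStar φ q, hφ.continuous_phiStar hint⟩
  refine hasSum_le (fun n => ?_) (hasSum_sq_fourierCoeff_ofReal hmem)
    (hasSum_sq_fourierCoeff_ofReal hq)
  rw [hφ.fourierCoeff_phiStar hint]
  split_ifs
  · rfl
  · simp

end IsDirichlet

section FixedSpace

variable {φ : 𝕋 → ℝ}

theorem phiStar_add (hφ : Continuous φ) (η ζ : C(𝕋, ℝ)) :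
    PhiStar φ ⇑(η + ζ) = PhiStar φ η + PhiStar φ ζ := by
  have hint (f : C(𝕋, ℝ)) (t : 𝕋) : Integrable fun x => φ (t - x) * f x :=
    ((hφ.comp (continuous_const.sub continuous_id)).mul
      f.continuous).integrable_of_hasCompactSupport (.of_compactSpace _)
  ext t
  simp only [PhiStar, ContinuousMap.coe_add, Pi.add_apply, mul_add]
  exact integral_add (hint η t) (hint ζ t)

theorem phiStar_smul (c : ℝ) (q : 𝕋 → ℝ) : PhiStar φ (c • q) = c • PhiStar φ q := by
  ext t
  simp only [PhiStar, Pi.smul_apply, smul_eq_mul, mul_left_comm _ c, integral_const_mul]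

/-- The space `Im Φ*` of the paper, as the fixed points of `Φ*` (a projection, by
`IsDirichlet.phiStar_phiStar`). -/
def phiStarFixed (hφ : Continuous φ) : Submodule ℝ C(𝕋, ℝ) where
  carrier := {η | PhiStar φ η = η}
  add_mem' {η ζ} (hη : PhiStar φ η = η) (hζ : PhiStar φ ζ = ζ) := by
    change PhiStar φ ⇑(η + ζ) = ⇑(η + ζ)
    rw [phiStar_add hφ, hη, hζ, ContinuousMap.coe_add]
  zero_mem' := by
    change PhiStar φ ⇑(0 : C(𝕋, ℝ)) = ⇑(0 : C(𝕋, ℝ))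
    ext t
    simp [PhiStar]
  smul_mem' c η (hη : PhiStar φ η = η) := by
    change PhiStar φ ⇑(c • η) = ⇑(c • η)
    rw [ContinuousMap.coe_smul, phiStar_smul, hη]

theorem dotL2_Phi_eq_sInt (hφ : Continuous φ) (m : SignedMeasure 𝕋) (η : phiStarFixed hφ) :
    dotL2 (Phi φ m) η = sInt m η := by
  rw [dotL2_Phi_eq_sInt_phiStar hφ m
    ((η : C(𝕋, ℝ)).continuous.integrable_of_hasCompactSupport (.of_compactSpace _)), η.2]

theorem dualAdm_of_norm_le_one {hφ : Continuous φ} {η : phiStarFixed hφ} (hη : ‖η‖ ≤ 1) :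
    DualAdm φ (η : C(𝕋, ℝ)) := by
  refine ⟨ContinuousMap.memLp _ ℝ _, fun t => ?_⟩
  rw [η.2]
  exact ((η : C(𝕋, ℝ)).norm_coe_le_norm t).trans hη

end FixedSpace

def trigPolyRe (s : Finset ℤ) : (s → ℂ) →ₗ[ℝ] C(𝕋, ℝ) where
  toFun c := ⟨fun t => (∑ n : s, c n * fourier (n : ℤ) t).re, by fun_prop⟩
  map_add' c d := by ext t; simp [add_mul, Finset.sum_add_distrib]
  map_smul' r c := by
    ext t
    simp only [ContinuousMap.coe_mk, Pi.smul_apply, real_smul, mul_assoc, ← Finset.mul_sum,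
      re_ofReal_mul, RingHom.id_apply, ContinuousMap.coe_smul, smul_eq_mul]

namespace IsDirichlet

variable {fc : ℕ} {φ : 𝕋 → ℝ}

theorem phiStarFixed_le_range_trigPolyRe (hφ : IsDirichlet fc φ) :
    phiStarFixed hφ.continuous ≤ LinearMap.range (trigPolyRe (Finset.Icc (-(fc : ℤ)) fc)) := by
  intro η (hη : PhiStar φ η = η)
  refine ⟨fun n => fourierCoeff (fun x => (η x : ℂ)) n, ?_⟩
  ext t
  have hint : Integrable η := η.continuous.integrable_of_hasCompactSupport (.of_compactSpace _)
  rw [← congrFun hη t, ← ofReal_re (PhiStar φ η t), hφ.ofReal_phiStar hint]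
  exact congrArg re
    (Finset.sum_coe_sort _ fun n => fourierCoeff (fun x => (η x : ℂ)) n * fourier n t)

theorem finiteDimensional_phiStarFixed (hφ : IsDirichlet fc φ) :
    FiniteDimensional ℝ (phiStarFixed hφ.continuous) :=
  Submodule.finiteDimensional_of_le hφ.phiStarFixed_le_range_trigPolyRe

theorem exists_mem_closedBall_of_dualAdm (hφ : IsDirichlet fc φ) (m : SignedMeasure 𝕋)
    {q : 𝕋 → ℝ} (hq : DualAdm φ q) :
    ∃ η ∈ Metric.closedBall (0 : phiStarFixed hφ.continuous) 1,
      dotL2 (Phi φ m) q = sInt m η ∧ ∫ x, (η : C(𝕋, ℝ)) x ^ 2 ≤ ∫ x, q x ^ 2 := by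
  have hint := hq.1.integrable one_le_two
  let η : phiStarFixed hφ.continuous :=
    ⟨⟨PhiStar φ q, hφ.continuous_phiStar hint⟩, hφ.phiStar_phiStar hint⟩
  refine ⟨η, ?_, dotL2_Phi_eq_sInt_phiStar hφ.continuous m hint,
    hφ.integral_phiStar_sq_le hq.1⟩
  rw [mem_closedBall_zero_iff]
  change ‖(η : C(𝕋, ℝ))‖ ≤ 1
  exact (ContinuousMap.norm_le _ zero_le_one).2 hq.2

end IsDirichlet

/-- For the ideal low-pass filter with cutoff frequency `f_c`, the dual problem
`sup { ⟨y,p⟩ : ‖Φ*p‖_∞ ≤ 1 }` always admits a solution; hence the minimal-norm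
certificate `p₀` is well defined for any input measure `m₀`. -/
theorem exists_minimal_norm_certificate_lowpass (fc : ℕ) (φ : 𝕋 → ℝ)
    (hφ : IsDirichlet fc φ) (m₀ : SignedMeasure 𝕋) (y : 𝕋 → ℝ) (hy : y = Phi φ m₀) :
    ∃ p₀ : 𝕋 → ℝ, DualAdm φ p₀ ∧ (∀ q, DualAdm φ q → dotL2 y q ≤ dotL2 y p₀) ∧
      ∀ q, DualAdm φ q → dotL2 y q = dotL2 y p₀ → L2norm p₀ ≤ L2norm q := by
  subst hy
  have hφc := hφ.continuous
  have := hφ.finiteDimensional_phiStarFixed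
  obtain ⟨η₀, hη₀, hmax, hmin⟩ :=
    (isCompact_closedBall (0 : phiStarFixed hφc) 1).exists_isMaxOn_isMinOn_argmax
      ⟨0, Metric.mem_closedBall_self zero_le_one⟩
      ((continuous_sInt m₀).comp continuous_subtype_val)
      (((continuous_integral_continuousMap volume).comp (continuous_pow 2)).comp
        continuous_subtype_val)
  refine ⟨η₀, dualAdm_of_norm_le_one (mem_closedBall_zero_iff.mp hη₀), fun q hq => ?_,
    fun q hq heq => ?_⟩
  · obtain ⟨η, hη, hdot, -⟩ := hφ.exists_mem_closedBall_of_dualAdm m₀ hq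
    rw [hdot, dotL2_Phi_eq_sInt hφc]
    exact hmax hη
  · obtain ⟨η, hη, hdot, hsq⟩ := hφ.exists_mem_closedBall_of_dualAdm m₀ hq
    refine Real.sqrt_le_sqrt ((hmin ⟨hη, ?_⟩).trans hsq)
    change sInt m₀ η = sInt m₀ η₀
    rw [← hdot, heq, dotL2_Phi_eq_sInt hφc]
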